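/- Let {X_n} be a sequence of compact length spaces converging in the Gromov–Hausdorff sense to a compact length space X homeomorphic to a 2-manifold, and suppose limsup_{n→∞} H²(X_n) < ∞. Then for each δ > 0 and for any sequence of pairs of disjoint continua E_n, F_n ⊂ X_n with min{diam(E_n), diam(F_n)} ≥ δ for all n, one has limsup_{n→∞} Mod Γ*(E_n, F_n; X_n) < ∞. -/

import Mathlib

open Metric MeasureTheory Filter Set
open scoped ENNReal NNReal Topology

/-!
STATEMENT 8: Uniform upper bound on the modulus of separating curve families along a
Gromov–Hausdorff convergent sequence of compact length spaces whose limit is a compact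
length surface, under a uniform area bound.

The 2-modulus of a curve family is defined with respect to the Hausdorff 2-measure
(normalized so as to coincide with Lebesgue measure on the plane); line integrals are taken
with respect to arc length, via the unit-speed (natural) reparametrization of a rectifiable
curve.  `Γ*(E,F;Z)` is the family of rectifiable curves in `Z \ (E ∪ F)` whose trace
separates `E` from `F`.
-/

/-- A curve in a metric space: a continuous map on a compact interval. -/
structure Curve (X : Type*) [MetricSpace X] where
  a : ℝ
  b : ℝ
  hab : a ≤ b
  toFun : ℝ → X
  cont : ContinuousOn toFun (Set.Icc a b)

namespace Curve
variable {X Y : Type*} [MetricSpace X] [MetricSpace Y]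

/-- The length of a curve: the total variation of its parametrization. -/
noncomputable def length (γ : Curve X) : ℝ≥0∞ := eVariationOn γ.toFun (Set.Icc γ.a γ.b)

/-- The trace (image) of a curve. -/
def trace (γ : Curve X) : Set X := γ.toFun '' Set.Icc γ.a γ.b

/-- The integral of `ρ` along a (rectifiable) curve with respect to arc length, computed
via the unit-speed (natural) reparametrization of the curve. -/
noncomputable def lineIntegral (γ : Curve X) (ρ : X → ℝ≥0∞) : ℝ≥0∞ :=
  ∫⁻ s in Set.Icc (0 : ℝ) γ.length.toReal,
    ρ (naturalParameterization γ.toFun (Set.Icc γ.a γ.b) γ.a s)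

end Curve

/-- The Hausdorff 2-measure, normalized so as to coincide with Lebesgue measure on `ℝ²`. -/
noncomputable def hausdorff2 (X : Type*) [MetricSpace X] [MeasurableSpace X] [BorelSpace X] :
    Measure X := (ENNReal.ofReal (Real.pi / 4)) • MeasureTheory.Measure.hausdorffMeasure 2

/-- `ρ` is admissible for the curve family `Γ` if it is Borel and `∫_γ ρ ds ≥ 1` for
every rectifiable curve `γ ∈ Γ`. -/
def Admissible {X : Type*} [MetricSpace X] [MeasurableSpace X] [BorelSpace X]
    (ρ : X → ℝ≥0∞) (Γ : Set (Curve X)) : Prop :=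
  Measurable ρ ∧ ∀ γ ∈ Γ, γ.length ≠ ⊤ → 1 ≤ γ.lineIntegral ρ

/-- The 2-modulus of a curve family, with respect to the Hausdorff 2-measure. -/
noncomputable def modulus {X : Type*} [MetricSpace X] [MeasurableSpace X] [BorelSpace X]
    (Γ : Set (Curve X)) : ℝ≥0∞ :=
  ⨅ (ρ : X → ℝ≥0∞) (_ : Admissible ρ Γ), ∫⁻ x, (ρ x) ^ 2 ∂(hausdorff2 X)

/-- A length space: the distance between any two points is the infimum of the lengths
of curves joining them. -/
def IsLengthSpace (X : Type*) [MetricSpace X] : Prop :=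
  ∀ x y : X, edist x y =
    ⨅ γ : {γ : Curve X // γ.toFun γ.a = x ∧ γ.toFun γ.b = y}, γ.1.length

/-- `Γ*(E,F;Z)`: the family of rectifiable curves in `Z \ (E ∪ F)` whose trace separates
`E` from `F`, i.e. no point of `E` lies in the same connected component of the complement
of the trace as a point of `F`. -/
def separatingCurves {Z : Type*} [MetricSpace Z] (E F : Set Z) : Set (Curve Z) :=
  {γ | γ.length ≠ ⊤ ∧ γ.trace ∩ (E ∪ F) = ∅ ∧
    ∀ x ∈ E, ∀ y ∈ F, y ∉ connectedComponentIn γ.traceᶜ x}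

/-!
If all curves of `Γ*(E, F; Z)` have length at least `m`, the constant `1 / m` is admissible, so
it suffices to bound the lengths of separating curves from below, eventually. A separating curve
of length `r` pinches a length space at a point `p`: if `u` and `v` lie on different sides of it,
then `d(u, p) + d(v, p) ≤ d(u, v) + 2r`, and both sides reach distance about `δ` from `p`. Such
almost-cuts pass to `Y` through Gromov–Hausdorff correspondences, so separating curves of
length `rⱼ → 0` would produce, in an ultralimit, a point `q` and two closed sets covering
`Y \ {q}`, meeting only at `q`, and both leaving `q`. This cannot happen in a connected surface,
where `q` has a neighbourhood that stays connected when `q` is removed.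
-/

namespace Curve

variable {Z : Type*} [MetricSpace Z] (γ : Curve Z)

theorem start_mem_trace : γ.toFun γ.a ∈ γ.trace := ⟨γ.a, ⟨le_rfl, γ.hab⟩, rfl⟩

theorem end_mem_trace : γ.toFun γ.b ∈ γ.trace := ⟨γ.b, ⟨γ.hab, le_rfl⟩, rfl⟩

theorem isPreconnected_trace : IsPreconnected γ.trace := isPreconnected_Icc.image _ γ.cont

theorem isCompact_trace : IsCompact γ.trace := isCompact_Icc.image_of_continuousOn γ.cont

theorem edist_le_length {z w : Z} (hz : z ∈ γ.trace) (hw : w ∈ γ.trace) :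
    edist z w ≤ γ.length := by
  obtain ⟨s, hs, rfl⟩ := hz
  obtain ⟨t, ht, rfl⟩ := hw
  exact eVariationOn.edist_le _ hs ht

theorem lineIntegral_const (hγ : γ.length ≠ ⊤) (c : ℝ≥0∞) :
    γ.lineIntegral (fun _ => c) = c * γ.length := by
  rw [lineIntegral, setLIntegral_const, Real.volume_Icc, sub_zero, ENNReal.ofReal_toReal hγ]

end Curve

theorem modulus_le_of_forall_le_length {Z : Type*} [MetricSpace Z] [MeasurableSpace Z]
    [BorelSpace Z] {Γ : Set (Curve Z)} {m : ℝ≥0∞} (hm : m ≠ 0) (h : ∀ γ ∈ Γ, m ≤ γ.length) :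
    modulus Γ ≤ m⁻¹ ^ 2 * hausdorff2 Z univ := by
  have hadm : Admissible (fun _ => m⁻¹) Γ := by
    refine ⟨measurable_const, fun γ hγ hfin => ?_⟩
    rw [γ.lineIntegral_const hfin, ← ENNReal.inv_mul_cancel hm (ne_top_of_le_ne_top hfin (h γ hγ))]
    exact mul_le_mul_right (h γ hγ) _
  calc modulus Γ ≤ ∫⁻ _, m⁻¹ ^ 2 ∂(hausdorff2 Z) := iInf₂_le (fun _ => m⁻¹) hadm
    _ = m⁻¹ ^ 2 * hausdorff2 Z univ := lintegral_const _

namespace IsLengthSpace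

variable {Z : Type*} [MetricSpace Z]

theorem exists_curve (h : IsLengthSpace Z) (x y : Z) :
    ∃ γ : Curve Z, γ.toFun γ.a = x ∧ γ.toFun γ.b = y := by
  by_contra! hne
  have : IsEmpty {γ : Curve Z // γ.toFun γ.a = x ∧ γ.toFun γ.b = y} :=
    ⟨fun γ => hne γ.1 γ.2.1 γ.2.2⟩
  have hx := h x y
  rw [iInf_of_empty] at hx
  exact edist_ne_top x y hx

theorem preconnectedSpace (h : IsLengthSpace Z) : PreconnectedSpace Z := by
  refine ⟨isPreconnected_of_forall_pair fun x _ y _ => ?_⟩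
  obtain ⟨γ, rfl, rfl⟩ := h.exists_curve x y
  exact ⟨γ.trace, subset_univ _, γ.start_mem_trace, γ.end_mem_trace, γ.isPreconnected_trace⟩

theorem infEDist_add_infEDist_le_edist (h : IsLengthSpace Z) {T : Set Z} {u v : Z}
    (hv : v ∉ connectedComponentIn Tᶜ u) :
    infEDist u T + infEDist v T ≤ edist u v := by
  rw [h u v]
  refine le_iInf fun ⟨γ, hu, hv'⟩ => ?_
  obtain ⟨c, hc, hcT⟩ : ∃ c ∈ Icc γ.a γ.b, γ.toFun c ∈ T := by
    by_contra! hc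
    have hsub : γ.trace ⊆ connectedComponentIn Tᶜ u :=
      γ.isPreconnected_trace.subset_connectedComponentIn (hu ▸ γ.start_mem_trace)
        (by rintro _ ⟨c, hcI, rfl⟩; exact hc c hcI)
    exact hv (hsub (hv' ▸ γ.end_mem_trace))
  calc infEDist u T + infEDist v T
      ≤ eVariationOn γ.toFun (Icc γ.a γ.b ∩ Icc γ.a c) +
          eVariationOn γ.toFun (Icc γ.a γ.b ∩ Icc c γ.b) := by
        gcongr
        · rw [← hu]
          exact (infEDist_le_edist_of_mem hcT).trans
            (eVariationOn.edist_le _ ⟨⟨le_rfl, γ.hab⟩, le_rfl, hc.1⟩ ⟨hc, hc.1, le_rfl⟩)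
        · rw [← hv']
          exact ((infEDist_le_edist_of_mem hcT).trans_eq (edist_comm _ _)).trans
            (eVariationOn.edist_le _ ⟨hc, le_rfl, hc.2⟩ ⟨⟨γ.hab, le_rfl⟩, hc.2, le_rfl⟩)
    _ = γ.length := by
        rw [eVariationOn.Icc_add_Icc _ hc.1 hc.2 hc, inter_self]
        rfl

theorem infDist_add_infDist_le_dist (h : IsLengthSpace Z) {T : Set Z} (hT : T.Nonempty)
    {u v : Z} (hv : v ∉ connectedComponentIn Tᶜ u) :
    infDist u T + infDist v T ≤ dist u v := by
  rw [infDist, infDist, dist_edist, ← ENNReal.toReal_add (infEDist_ne_top hT) (infEDist_ne_top hT)]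
  exact ENNReal.toReal_mono (edist_ne_top u v) (h.infEDist_add_infEDist_le_edist hv)

end IsLengthSpace

/-- Up to an error `ε`, the point `p` cuts `Z` into `U` and `V`, both of which reach distance `c`
from `p`: `cross` says that going from `U` to `V` costs as much as passing through `p`. -/
structure IsPinchedSplitting {Z : Type*} [MetricSpace Z] (U V : Set Z) (p : Z) (c ε : ℝ) :
    Prop where
  cover : ∀ z, z ∈ U ∨ z ∈ V ∨ dist z p ≤ ε
  cross : ∀ u ∈ U, ∀ v ∈ V, dist u p + dist v p ≤ dist u v + ε
  far_left : ∃ u ∈ U, c ≤ dist u p + ε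
  far_right : ∃ v ∈ V, c ≤ dist v p + ε

theorem Metric.exists_lt_dist_of_two_mul_lt_diam {Z : Type*} [PseudoMetricSpace Z] {s : Set Z}
    {c : ℝ} (hc : 0 ≤ c) (h : 2 * c < diam s) (p : Z) : ∃ a ∈ s, c < dist a p := by
  by_contra! hs
  have : diam s ≤ 2 * c :=
    (diam_mono (fun a ha => mem_closedBall.mpr (hs a ha)) isBounded_closedBall).trans
      (diam_closedBall hc)
  linarith

theorem IsLengthSpace.isPinchedSplitting {Z : Type*} [MetricSpace Z] (hZ : IsLengthSpace Z)
    {E F : Set Z} {γ : Curve Z} (hγ : γ ∈ separatingCurves E F) {r δ : ℝ}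
    (hγr : γ.length < ENNReal.ofReal r) (hδ : 0 < δ) (hE : δ ≤ diam E) (hF : δ ≤ diam F) :
    IsPinchedSplitting (⋃ x ∈ E, connectedComponentIn γ.traceᶜ x)
      (γ.traceᶜ \ ⋃ x ∈ E, connectedComponentIn γ.traceᶜ x) (γ.toFun γ.a) (δ / 3) (2 * r) := by
  set T := γ.trace
  set p := γ.toFun γ.a
  set U := ⋃ x ∈ E, connectedComponentIn Tᶜ x
  have hr : 0 < r := ENNReal.ofReal_pos.mp (pos_of_gt hγr)
  have hT : ∀ z ∈ T, dist z p ≤ r := fun z hz =>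
    (edist_lt_ofReal.mp ((γ.edist_le_length hz γ.start_mem_trace).trans_lt hγr)).le
  have hdist : ∀ z, dist z p ≤ infDist z T + r := fun z => by
    obtain ⟨t, ht, hzt⟩ := γ.isCompact_trace.exists_infDist_eq_dist ⟨p, γ.start_mem_trace⟩ z
    linarith [dist_triangle z t p, hT t ht]
  have hET : E ⊆ Tᶜ := fun x hx hxT => (hγ.2.1 ▸ ⟨hxT, .inl hx⟩ : x ∈ (∅ : Set Z))
  have hFT : F ⊆ Tᶜ := fun x hx hxT => (hγ.2.1 ▸ ⟨hxT, .inr hx⟩ : x ∈ (∅ : Set Z))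
  have hFU : ∀ y ∈ F, y ∉ U := fun y hy hyU => by
    obtain ⟨x, hx, hyx⟩ := mem_iUnion₂.mp hyU
    exact hγ.2.2 x hx y hy hyx
  refine ⟨fun z => ?_, fun u hu v hv => ?_, ?_, ?_⟩
  · by_cases hzT : z ∈ T
    · exact .inr (.inr ((hT z hzT).trans (by linarith)))
    · by_cases hzU : z ∈ U
      exacts [.inl hzU, .inr (.inl ⟨hzT, hzU⟩)]
  · obtain ⟨x, hx, hux⟩ := mem_iUnion₂.mp hu
    have hvu : v ∉ connectedComponentIn Tᶜ u := fun hvu =>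
      hv.2 (mem_biUnion hx (connectedComponentIn_eq hux ▸ hvu))
    linarith [hZ.infDist_add_infDist_le_dist ⟨p, γ.start_mem_trace⟩ hvu, hdist u, hdist v]
  · obtain ⟨a, ha, hap⟩ := exists_lt_dist_of_two_mul_lt_diam (s := E) (c := δ / 3) (by positivity)
      (by linarith) p
    exact ⟨a, mem_biUnion ha (mem_connectedComponentIn (hET ha)), by linarith⟩
  · obtain ⟨b, hb, hbp⟩ := exists_lt_dist_of_two_mul_lt_diam (s := F) (c := δ / 3) (by positivity)
      (by linarith) p
    exact ⟨b, ⟨hFT hb, hFU b hb⟩, by linarith⟩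

structure IsCorrespondence {X Y : Type*} [MetricSpace X] [MetricSpace Y] (R : X → Y → Prop)
    (η : ℝ) : Prop where
  exists_right : ∀ x, ∃ y, R x y
  exists_left : ∀ y, ∃ x, R x y
  abs_dist_sub_dist_le : ∀ ⦃x x' y y'⦄, R x y → R x' y' → |dist x x' - dist y y'| ≤ η

namespace IsCorrespondence

variable {X Y : Type*} [MetricSpace X] [MetricSpace Y] {R : X → Y → Prop} {η : ℝ}
  {x x' : X} {y y' : Y}

theorem dist_left_le (hR : IsCorrespondence R η) (h : R x y) (h' : R x' y') :
    dist x x' ≤ dist y y' + η := by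
  linarith [(abs_sub_le_iff.mp (hR.abs_dist_sub_dist_le h h')).1]

theorem dist_right_le (hR : IsCorrespondence R η) (h : R x y) (h' : R x' y') :
    dist y y' ≤ dist x x' + η := by
  linarith [(abs_sub_le_iff.mp (hR.abs_dist_sub_dist_le h h')).2]

end IsCorrespondence

open GromovHausdorff in
theorem GromovHausdorff.exists_isCorrespondence_of_ghDist_lt {X Y : Type*} [MetricSpace X]
    [CompactSpace X] [Nonempty X] [MetricSpace Y] [CompactSpace Y] [Nonempty Y] {κ : ℝ}
    (h : ghDist X Y < κ) : ∃ R : X → Y → Prop, IsCorrespondence R (2 * κ) := by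
  set ι := optimalGHInjl X Y
  set ψ := optimalGHInjr X Y
  have hlt : hausdorffDist (range ι) (range ψ) < κ := hausdorffDist_optimal.trans_lt h
  have hfin : hausdorffEDist (range ι) (range ψ) ≠ ⊤ :=
    hausdorffEDist_ne_top_of_nonempty_of_bounded (range_nonempty _) (range_nonempty _)
      (isCompact_range (isometry_optimalGHInjl X Y).continuous).isBounded
      (isCompact_range (isometry_optimalGHInjr X Y).continuous).isBounded
  refine ⟨fun x y => dist (ι x) (ψ y) < κ, fun x => ?_, fun y => ?_, fun x x' y y' h h' => ?_⟩
  · obtain ⟨_, ⟨y, rfl⟩, hy⟩ := exists_dist_lt_of_hausdorffDist_lt (mem_range_self x) hlt hfin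
    exact ⟨y, hy⟩
  · obtain ⟨_, ⟨x, rfl⟩, hx⟩ := exists_dist_lt_of_hausdorffDist_lt' (mem_range_self y) hlt hfin
    exact ⟨x, hx⟩
  · rw [← (isometry_optimalGHInjl X Y).dist_eq, ← (isometry_optimalGHInjr X Y).dist_eq,
      ← Real.dist_eq]
    linarith [dist_dist_dist_le (ι x) (ι x') (ψ y) (ψ y')]

theorem IsPinchedSplitting.transfer {X Y : Type*} [MetricSpace X] [MetricSpace Y]
    {U V : Set X} {p : X} {c ε η : ℝ} (h : IsPinchedSplitting U V p c ε) {R : X → Y → Prop}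
    (hR : IsCorrespondence R η) {q : Y} (hpq : R p q) :
    IsPinchedSplitting {y | ∃ u ∈ U, R u y} {y | ∃ v ∈ V, R v y} q c (ε + 3 * η) := by
  have hη : 0 ≤ η := by simpa using hR.abs_dist_sub_dist_le hpq hpq
  refine ⟨fun y => ?_, fun y ⟨u, hu, huy⟩ z ⟨v, hv, hvz⟩ => ?_, ?_, ?_⟩
  · obtain ⟨x, hxy⟩ := hR.exists_left y
    rcases h.cover x with hx | hx | hx
    · exact .inl ⟨x, hx, hxy⟩
    · exact .inr (.inl ⟨x, hx, hxy⟩)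
    · exact .inr (.inr (by linarith [hR.dist_right_le hxy hpq]))
  · linarith [h.cross u hu v hv, hR.dist_right_le huy hpq, hR.dist_right_le hvz hpq,
      hR.dist_left_le huy hvz]
  · obtain ⟨u, hu, hcu⟩ := h.far_left
    obtain ⟨y, huy⟩ := hR.exists_right u
    exact ⟨y, ⟨u, hu, huy⟩, by linarith [hR.dist_left_le huy hpq]⟩
  · obtain ⟨v, hv, hcv⟩ := h.far_right
    obtain ⟨z, hvz⟩ := hR.exists_right v
    exact ⟨z, ⟨v, hv, hvz⟩, by linarith [hR.dist_left_le hvz hpq]⟩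

section KuratowskiLiminf

variable {ι Y : Type*} [MetricSpace Y]

def kuratowskiLiminf (l : Filter ι) (U : ι → Set Y) : Set Y :=
  {y | ∀ η > 0, ∀ᶠ j in l, ∃ u ∈ U j, dist y u < η}

theorem isClosed_kuratowskiLiminf (l : Filter ι) (U : ι → Set Y) :
    IsClosed (kuratowskiLiminf l U) := by
  refine isClosed_of_closure_subset fun y hy η hη => ?_
  obtain ⟨y', hy', hyy'⟩ := Metric.mem_closure_iff.mp hy (η / 2) (half_pos hη)
  filter_upwards [hy' (η / 2) (half_pos hη)] with j ⟨u, hu, hy'u⟩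
  exact ⟨u, hu, by linarith [dist_triangle y y' u]⟩

theorem mem_kuratowskiLiminf_of_tendsto {l : Filter ι} {U : ι → Set Y} {u : ι → Y} {y : Y}
    (hu : ∀ᶠ j in l, u j ∈ U j) (hy : Tendsto u l (𝓝 y)) : y ∈ kuratowskiLiminf l U :=
  fun η hη => (hu.and (Metric.tendsto_nhds.mp hy η hη)).mono fun j ⟨hj, hjy⟩ =>
    ⟨u j, hj, by rwa [dist_comm]⟩

variable [CompactSpace Y] (𝒰 : Ultrafilter ι)

theorem tendsto_lim_map (f : ι → Y) : Tendsto f 𝒰 (𝓝 (𝒰.map f).lim) := by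
  simpa only [Tendsto, Ultrafilter.coe_map] using (𝒰.map f).le_nhds_lim

theorem exists_mem_kuratowskiLiminf_le_dist {U : ι → Set Y} {p : ι → Y} {q : Y} {c : ℝ}
    {ε : ι → ℝ} (hp : Tendsto p 𝒰 (𝓝 q)) (hε : Tendsto ε 𝒰 (𝓝 0))
    (h : ∀ j, ∃ u ∈ U j, c ≤ dist u (p j) + ε j) :
    ∃ y ∈ kuratowskiLiminf 𝒰 U, c ≤ dist y q + 0 := by
  choose u hu hcu using h
  have hy := tendsto_lim_map 𝒰 u
  exact ⟨_, mem_kuratowskiLiminf_of_tendsto (.of_forall hu) hy,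
    le_of_tendsto_of_tendsto' tendsto_const_nhds ((hy.dist hp).add hε) hcu⟩

theorem IsPinchedSplitting.kuratowskiLiminf {U V : ι → Set Y} {p : ι → Y} {c : ℝ}
    {ε : ι → ℝ} (h : ∀ j, IsPinchedSplitting (U j) (V j) (p j) c (ε j))
    (hε : Tendsto ε 𝒰 (𝓝 0)) :
    IsPinchedSplitting (kuratowskiLiminf 𝒰 U) (kuratowskiLiminf 𝒰 V) (𝒰.map p).lim c 0 := by
  set q := (𝒰.map p).lim
  have hp : Tendsto p 𝒰 (𝓝 q) := tendsto_lim_map 𝒰 p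
  refine ⟨fun y => ?_, fun y hy z hz => ?_, exists_mem_kuratowskiLiminf_le_dist 𝒰 hp hε
    fun j => (h j).far_left, exists_mem_kuratowskiLiminf_le_dist 𝒰 hp hε fun j => (h j).far_right⟩
  · -- an ultrafilter picks one of the three alternatives of `cover`
    rcases Ultrafilter.eventually_or.mp (.of_forall fun j => (h j).cover y) with hU | hVp
    · exact .inl (mem_kuratowskiLiminf_of_tendsto hU tendsto_const_nhds)
    rcases Ultrafilter.eventually_or.mp hVp with hV | hyp
    · exact .inr (.inl (mem_kuratowskiLiminf_of_tendsto hV tendsto_const_nhds))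
    · exact .inr (.inr (le_of_tendsto_of_tendsto (tendsto_const_nhds.dist hp) hε hyp))
  · refine le_of_forall_pos_lt_add fun η hη => ?_
    have hη8 : 0 < η / 8 := by positivity
    obtain ⟨j, ⟨u, hu, hyu⟩, ⟨v, hv, hzv⟩, hpq, hεj⟩ := ((hy _ hη8).and ((hz _ hη8).and
      ((Metric.tendsto_nhds.mp hp _ hη8).and (hε.eventually_lt_const hη8)))).exists
    linarith [(h j).cross u hu v hv, dist_triangle y u (p j), dist_triangle z v (p j),
      dist_triangle y (p j) q, dist_triangle z (p j) q, dist_triangle4 u y z v,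
      dist_comm u y, dist_comm v z]

end KuratowskiLiminf

section PuncturedConvex

variable {V : Type*} [NormedAddCommGroup V] [NormedSpace ℝ V]

theorem collinear_of_subset_affineSpan_pair {C : Set V} {y z : V} (h : C ⊆ line[ℝ, y, z]) :
    Collinear ℝ C := by
  have hspan : vectorSpan ℝ C ≤ vectorSpan ℝ {y, z} := by
    rw [← direction_affineSpan, ← direction_affineSpan]
    exact AffineSubspace.direction_le (affineSpan_le.mpr h)
  exact (Submodule.rank_mono hspan).trans (collinear_pair ℝ y z)

theorem notMem_segment_of_notMem_affineSpan_pair {x y z w : V} (hx : x ∈ line[ℝ, y, z])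
    (hxy : x ≠ y) (hw : w ∉ line[ℝ, y, z]) : x ∉ segment ℝ y w := by
  intro hseg
  have hw' : w ∈ line[ℝ, y, x] :=
    (mem_segment_iff_wbtw.mp hseg).collinear.mem_affineSpan_of_mem_of_ne
      (by simp) (by simp) (by simp) hxy.symm
  exact hw (affineSpan_pair_le_of_mem_of_mem (left_mem_affineSpan_pair ℝ y z) hx hw')

theorem Convex.isPreconnected_diff_singleton {C : Set V} (hC : Convex ℝ C)
    (hC₂ : ¬Collinear ℝ C) (x : V) : IsPreconnected (C \ {x}) := by
  have segment_subset {y z : V} (hy : y ∈ C) (hz : z ∈ C) (hx : x ∉ segment ℝ y z) :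
      segment ℝ y z ⊆ C \ {x} :=
    fun p hp => ⟨hC.segment_subset hy hz hp, fun h => hx (h ▸ hp)⟩
  refine isPreconnected_of_forall_pair fun y ⟨hyC, hyx⟩ z ⟨hzC, hzx⟩ => ?_
  by_cases hx : x ∈ segment ℝ y z
  · -- go around `x` through a point off the line `yz`
    obtain ⟨w, hwC, hw⟩ : ∃ w ∈ C, w ∉ line[ℝ, y, z] := by
      by_contra! h
      exact hC₂ (collinear_of_subset_affineSpan_pair h)
    have hx_line : x ∈ line[ℝ, y, z] := (mem_segment_iff_wbtw.mp hx).mem_affineSpan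
    have hyw : x ∉ segment ℝ y w :=
      notMem_segment_of_notMem_affineSpan_pair hx_line (Ne.symm hyx) hw
    have hwz : x ∉ segment ℝ w z := by
      rw [segment_symm]
      rw [pair_comm] at hx_line hw
      exact notMem_segment_of_notMem_affineSpan_pair hx_line (Ne.symm hzx) hw
    exact ⟨segment ℝ y w ∪ segment ℝ w z,
      union_subset (segment_subset hyC hwC hyw) (segment_subset hwC hzC hwz),
      .inl (left_mem_segment ℝ y w), .inr (right_mem_segment ℝ w z),
      (convex_segment y w).isPreconnected.union w (right_mem_segment ℝ y w)
        (left_mem_segment ℝ w z) (convex_segment w z).isPreconnected⟩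
  · exact ⟨segment ℝ y z, segment_subset hyC hzC hx, left_mem_segment ℝ y z,
      right_mem_segment ℝ y z, (convex_segment y z).isPreconnected⟩

theorem IsOpen.not_collinear (hV : 1 < Module.rank ℝ V) {U : Set V} (hU : IsOpen U)
    (hne : U.Nonempty) : ¬Collinear ℝ U := by
  rw [Collinear, ← direction_affineSpan, hU.affineSpan_eq_top hne, AffineSubspace.direction_top,
    rank_top, not_le]
  exact hV

end PuncturedConvex

section EuclideanHalfSpace

variable {n : ℕ} [NeZero n]

theorem not_collinear_ball_inter_halfSpace (hn : 1 < n) (v : EuclideanSpace ℝ (Fin n))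
    (hv : 0 ≤ v 0) {r : ℝ} (hr : 0 < r) :
    ¬Collinear ℝ (ball v r ∩ {u | 0 ≤ u 0}) := by
  have hrank : 1 < Module.rank ℝ (EuclideanSpace ℝ (Fin n)) := by
    rw [← Module.finrank_eq_rank, finrank_euclideanSpace_fin]; exact_mod_cast hn
  have hopen : IsOpen (ball v r ∩ {u : EuclideanSpace ℝ (Fin n) | 0 < u 0}) :=
    isOpen_ball.inter (isOpen_lt continuous_const (EuclideanSpace.proj (0 : Fin n)).continuous)
  have hne : (ball v r ∩ {u : EuclideanSpace ℝ (Fin n) | 0 < u 0}).Nonempty := by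
    refine ⟨v + (r / 2) • EuclideanSpace.single 0 1, ?_, ?_⟩
    · rw [mem_ball, dist_self_add_left, norm_smul, PiLp.norm_single, norm_one, mul_one,
        Real.norm_of_nonneg (by positivity)]
      linarith
    · simp only [mem_ofPred_eq, PiLp.add_apply, PiLp.smul_apply, PiLp.single_eq_same,
        smul_eq_mul, mul_one]
      linarith
  exact fun h => hopen.not_collinear hrank hne
    (h.subset (inter_subset_inter_right _ fun u (hu : 0 < u 0) => hu.le))

theorem EuclideanHalfSpace.exists_mem_nhds_isPreconnected_diff_singleton (hn : 1 < n)
    (p : EuclideanHalfSpace n) {W : Set (EuclideanHalfSpace n)} (hW : W ∈ 𝓝 p) :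
    ∃ S ∈ 𝓝 p, S ⊆ W ∧ IsPreconnected (S \ {p}) := by
  obtain ⟨t, ht, htW⟩ := (mem_nhds_induced Subtype.val p W).mp hW
  obtain ⟨r, hr, hball⟩ := Metric.mem_nhds_iff.mp ht
  refine ⟨Subtype.val ⁻¹' ball p.val r,
    continuous_subtype_val.continuousAt.preimage_mem_nhds (ball_mem_nhds _ hr),
    (preimage_mono hball).trans htW, ?_⟩
  have hval : Topology.IsInducing (Subtype.val : EuclideanHalfSpace n → _) := ⟨rfl⟩
  have himage : Subtype.val '' (Subtype.val ⁻¹' ball p.val r \ {p}) =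
      (ball p.val r ∩ {u | 0 ≤ u 0}) \ {p.val} := by
    ext u
    constructor
    · rintro ⟨u, ⟨hu, hup⟩, rfl⟩
      exact ⟨⟨hu, u.2⟩, fun h => hup (Subtype.ext h)⟩
    · rintro ⟨⟨hu, hu0⟩, hup⟩
      exact ⟨⟨u, hu0⟩, ⟨hu, fun h => hup (congrArg Subtype.val h)⟩, rfl⟩
  rw [← hval.isPreconnected_image, himage]
  exact ((convex_ball p.val r).inter EuclideanHalfSpace.convex).isPreconnected_diff_singleton
    (not_collinear_ball_inter_halfSpace hn p.val p.2 hr) p.val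

end EuclideanHalfSpace

theorem ChartedSpace.exists_mem_nhds_isPreconnected_diff_singleton {H Y : Type*}
    [TopologicalSpace H] [TopologicalSpace Y] [ChartedSpace H Y]
    (hH : ∀ p : H, ∀ W ∈ 𝓝 p, ∃ S ∈ 𝓝 p, S ⊆ W ∧ IsPreconnected (S \ {p})) (q : Y) :
    ∃ N ∈ 𝓝 q, IsPreconnected (N \ {q}) := by
  set e := chartAt H q
  have hq : q ∈ e.source := mem_chart_source H q
  obtain ⟨S, hS, hSt, hSq⟩ := hH (e q) e.target (e.open_target.mem_nhds (e.map_source hq))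
  refine ⟨e.symm '' S, ?_, ?_⟩
  · simpa only [e.left_inv hq] using e.symm.image_mem_nhds (e.map_source hq) hS
  · have himage : e.symm '' S \ {q} = e.symm '' (S \ {e q}) := by
      rw [(e.symm.injOn.mono hSt).image_sdiff_subset
        (singleton_subset_iff.mpr (mem_of_mem_nhds hS)), image_singleton, e.left_inv hq]
    rw [himage]
    exact hSq.image _ (e.continuousOn_symm.mono (sdiff_subset.trans hSt))

section PuncturedNhd

variable {Y : Type*} [TopologicalSpace Y] [T1Space Y] [PreconnectedSpace Y] {q : Y} {N A B : Set Y}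

theorem subset_singleton_of_diff_singleton_subset (hN : N ∈ 𝓝 q) (hA : IsClosed A)
    (hB : IsClosed B) (hcover : {q}ᶜ ⊆ A ∪ B) (hAB : A ∩ B ⊆ {q}) (hNA : N \ {q} ⊆ A) :
    B ⊆ {q} := by
  have hopen : IsOpen (B \ {q}) := by
    have : B \ {q} = {q}ᶜ \ A := by
      ext y
      exact ⟨fun ⟨hyB, hyq⟩ => ⟨hyq, fun hyA => hyq (hAB ⟨hyA, hyB⟩)⟩,
        fun ⟨hyq, hyA⟩ => ⟨(hcover hyq).resolve_left hyA, hyq⟩⟩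
    rw [this]
    exact isOpen_compl_singleton.sdiff hA
  have hclosed : IsClosed (B \ {q}) := by
    refine isClosed_of_closure_subset fun y hy => ⟨closure_minimal sdiff_subset hB hy, ?_⟩
    rintro rfl
    obtain ⟨z, hzN, hzB, hzq⟩ := mem_closure_iff_nhds.mp hy N hN
    exact hzq (hAB ⟨hNA ⟨hzN, hzq⟩, hzB⟩)
  rcases isClopen_iff.mp ⟨hclosed, hopen⟩ with h | h
  · exact sdiff_eq_empty.mp h
  · exact absurd (h ▸ mem_univ q : q ∈ B \ {q}).2 (by simp)

theorem subset_singleton_or_subset_singleton (hN : N ∈ 𝓝 q) (hNq : IsPreconnected (N \ {q}))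
    (hA : IsClosed A) (hB : IsClosed B) (hcover : {q}ᶜ ⊆ A ∪ B) (hAB : A ∩ B ⊆ {q}) :
    A ⊆ {q} ∨ B ⊆ {q} := by
  have hdisj : (N \ {q}) ∩ (A ∩ B) = ∅ :=
    eq_empty_of_forall_notMem fun y hy => hy.1.2 (hAB hy.2)
  rcases isPreconnected_iff_subset_of_disjoint_closed.mp hNq A B hA hB
    (fun y hy => hcover hy.2) hdisj with hNA | hNB
  · exact .inr (subset_singleton_of_diff_singleton_subset hN hA hB hcover hAB hNA)
  · exact .inl (subset_singleton_of_diff_singleton_subset hN hB hA (union_comm A B ▸ hcover)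
      (inter_comm A B ▸ hAB) hNB)

end PuncturedNhd

theorem not_isPinchedSplitting_of_isClosed {Y : Type*} [MetricSpace Y] [PreconnectedSpace Y]
    {q : Y} {N : Set Y} (hN : N ∈ 𝓝 q) (hNq : IsPreconnected (N \ {q})) {A B : Set Y}
    (hA : IsClosed A) (hB : IsClosed B) {c : ℝ} (hc : 0 < c) : ¬IsPinchedSplitting A B q c 0 := by
  intro h
  have hcover : {q}ᶜ ⊆ A ∪ B := fun y hy => by
    rcases h.cover y with hyA | hyB | hyq
    exacts [.inl hyA, .inr hyB, absurd (dist_le_zero.mp hyq) hy]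
  have hAB : A ∩ B ⊆ {q} := fun y ⟨hyA, hyB⟩ => by
    have := h.cross y hyA y hyB
    rw [dist_self] at this
    exact dist_le_zero.mp (by linarith [dist_nonneg (x := y) (y := q)])
  have far {S : Set Y} (hS : ∃ y ∈ S, c ≤ dist y q + 0) : ¬S ⊆ {q} := fun hSq => by
    obtain ⟨y, hy, hcy⟩ := hS
    rw [hSq hy, dist_self] at hcy
    linarith
  rcases subset_singleton_or_subset_singleton hN hNq hA hB hcover hAB with hAq | hBq
  exacts [far h.far_left hAq, far h.far_right hBq]

theorem exists_isPinchedSplitting_of_mem_separatingCurves {X Y : Type*} [MetricSpace X]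
    [CompactSpace X] [Nonempty X] [MetricSpace Y] [CompactSpace Y] [Nonempty Y]
    (hX : IsLengthSpace X) {E F : Set X} {γ : Curve X} (hγ : γ ∈ separatingCurves E F)
    {r δ : ℝ} (hγr : γ.length < ENNReal.ofReal r) (hXY : GromovHausdorff.ghDist X Y < r)
    (hδ : 0 < δ) (hE : δ ≤ diam E) (hF : δ ≤ diam F) :
    ∃ (U V : Set Y) (q : Y), IsPinchedSplitting U V q (δ / 3) (8 * r) := by
  obtain ⟨R, hR⟩ := GromovHausdorff.exists_isCorrespondence_of_ghDist_lt hXY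
  obtain ⟨q, hq⟩ := hR.exists_right (γ.toFun γ.a)
  have h := (hX.isPinchedSplitting hγ hγr hδ hE hF).transfer hR hq
  rw [show 2 * r + 3 * (2 * r) = 8 * r by ring] at h
  exact ⟨_, _, q, h⟩

theorem exists_ne_zero_eventually_le_length (X : ℕ → Type*) [∀ n, MetricSpace (X n)]
    [∀ n, CompactSpace (X n)] [∀ n, Nonempty (X n)] (hXlen : ∀ n, IsLengthSpace (X n))
    (Y : Type*) [MetricSpace Y] [CompactSpace Y] [Nonempty Y] (hYlen : IsLengthSpace Y)
    (hY : ∀ q : Y, ∃ N ∈ 𝓝 q, IsPreconnected (N \ {q}))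
    (hGH : Tendsto (fun n => GromovHausdorff.ghDist (X n) Y) atTop (𝓝 0))
    {δ : ℝ} (hδ : 0 < δ) (E F : ∀ n, Set (X n))
    (hdiam : ∀ n, δ ≤ diam (E n) ∧ δ ≤ diam (F n)) :
    ∃ m : ℝ≥0∞, m ≠ 0 ∧
      ∀ᶠ n in atTop, ∀ γ ∈ separatingCurves (E n) (F n), m ≤ γ.length := by
  by_contra! hshort
  have hfreq (j : ℕ) : ∃ᶠ n in atTop, (∃ γ ∈ separatingCurves (E n) (F n),
      γ.length < ENNReal.ofReal (1 / (j + 1))) ∧ GromovHausdorff.ghDist (X n) Y < 1 / (j + 1) :=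
    (hshort _ (by positivity)).and_eventually (hGH.eventually_lt_const (by positivity))
  obtain ⟨φ, -, hφ⟩ := extraction_forall_of_frequently hfreq
  have hsplit (j : ℕ) : ∃ (U V : Set Y) (q : Y),
      IsPinchedSplitting U V q (δ / 3) (8 * (1 / (j + 1))) :=
    let ⟨⟨_, hγ, hγr⟩, hXY⟩ := hφ j
    exists_isPinchedSplitting_of_mem_separatingCurves (hXlen _) hγ hγr hXY hδ
      (hdiam _).1 (hdiam _).2
  choose U V q hUV using hsplit
  set 𝒰 := Ultrafilter.of (atTop : Filter ℕ)
  have hε : Tendsto (fun j : ℕ => 8 * (1 / ((j : ℝ) + 1))) 𝒰 (𝓝 0) := by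
    simpa only [mul_zero] using
      (tendsto_one_div_add_atTop_nhds_zero_nat.const_mul (8 : ℝ)).mono_left (Ultrafilter.of_le _)
  have := hYlen.preconnectedSpace
  obtain ⟨N, hN, hNq⟩ := hY (𝒰.map q).lim
  exact not_isPinchedSplitting_of_isClosed hN hNq (isClosed_kuratowskiLiminf _ _)
    (isClosed_kuratowskiLiminf _ _) (by positivity) (IsPinchedSplitting.kuratowskiLiminf 𝒰 hUV hε)

theorem limsup_modulus_separating_lt_top_general
    (X : ℕ → Type) [∀ n, MetricSpace (X n)] [∀ n, CompactSpace (X n)] [∀ n, Nonempty (X n)]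
    [∀ n, MeasurableSpace (X n)] [∀ n, BorelSpace (X n)]
    (hXlen : ∀ n, IsLengthSpace (X n))
    (Y : Type) [MetricSpace Y] [CompactSpace Y] [Nonempty Y]
    -- `Y` is (homeomorphic to) a 2-manifold, possibly with boundary:
    [ChartedSpace (EuclideanHalfSpace 2) Y]
    (hYlen : IsLengthSpace Y)
    -- Gromov–Hausdorff convergence of `Xₙ` to `Y`:
    (hGH : Tendsto (fun n => GromovHausdorff.ghDist (X n) Y) atTop (𝓝 0))
    -- uniformly bounded areas:
    (harea : limsup (fun n => hausdorff2 (X n) Set.univ) atTop < ⊤)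
    (δ : ℝ) (hδ : 0 < δ)
    -- disjoint continua `Eₙ, Fₙ ⊆ Xₙ` of diameter at least `δ`:
    (E F : ∀ n, Set (X n))
    (hdiam : ∀ n, δ ≤ Metric.diam (E n) ∧ δ ≤ Metric.diam (F n)) :
    limsup (fun n => modulus (separatingCurves (E n) (F n))) atTop < ⊤ := by
  have hY (q : Y) : ∃ N ∈ 𝓝 q, IsPreconnected (N \ {q}) :=
    ChartedSpace.exists_mem_nhds_isPreconnected_diff_singleton
      (EuclideanHalfSpace.exists_mem_nhds_isPreconnected_diff_singleton one_lt_two) q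
  obtain ⟨m, hm, hlength⟩ :=
    exists_ne_zero_eventually_le_length X hXlen Y hYlen hY hGH hδ E F hdiam
  calc limsup (fun n => modulus (separatingCurves (E n) (F n))) atTop
      ≤ limsup (fun n => m⁻¹ ^ 2 * hausdorff2 (X n) univ) atTop :=
        limsup_le_limsup (hlength.mono fun n hn => modulus_le_of_forall_le_length hm hn)
    _ = m⁻¹ ^ 2 * limsup (fun n => hausdorff2 (X n) univ) atTop :=
        ENNReal.limsup_const_mul_of_ne_top (ENNReal.pow_ne_top (ENNReal.inv_ne_top.mpr hm))
    _ < ⊤ := ENNReal.mul_lt_top (ENNReal.pow_lt_top (ENNReal.inv_lt_top.mpr hm.bot_lt)) harea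

theorem limsup_modulus_separating_lt_top
    (X : ℕ → Type) [∀ n, MetricSpace (X n)] [∀ n, CompactSpace (X n)] [∀ n, Nonempty (X n)]
    [∀ n, MeasurableSpace (X n)] [∀ n, BorelSpace (X n)]
    (hXlen : ∀ n, IsLengthSpace (X n))
    (Y : Type) [MetricSpace Y] [CompactSpace Y] [Nonempty Y]
    [MeasurableSpace Y] [BorelSpace Y]
    -- `Y` is (homeomorphic to) a 2-manifold, possibly with boundary:
    [ChartedSpace (EuclideanHalfSpace 2) Y] [T2Space Y]
    (hYlen : IsLengthSpace Y)
    -- Gromov–Hausdorff convergence of `Xₙ` to `Y`: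
    (hGH : Tendsto (fun n => GromovHausdorff.ghDist (X n) Y) atTop (𝓝 0))
    -- uniformly bounded areas:
    (harea : limsup (fun n => hausdorff2 (X n) Set.univ) atTop < ⊤)
    (δ : ℝ) (hδ : 0 < δ)
    -- disjoint continua `Eₙ, Fₙ ⊆ Xₙ` of diameter at least `δ`:
    (E F : ∀ n, Set (X n))
    (hEcont : ∀ n, IsCompact (E n) ∧ IsConnected (E n))
    (hFcont : ∀ n, IsCompact (F n) ∧ IsConnected (F n))
    (hdisj : ∀ n, Disjoint (E n) (F n))
    (hdiam : ∀ n, δ ≤ Metric.diam (E n) ∧ δ ≤ Metric.diam (F n)) :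
    limsup (fun n => modulus (separatingCurves (E n) (F n))) atTop < ⊤ :=
  limsup_modulus_separating_lt_top_general X hXlen Y hYlen hGH harea δ hδ E F hdiam
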